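/- arXiv:0705.4153 — 3 statements merged into one kernel-verified Lean document; each statement's English description precedes it below -/
import Mathlib

section
/- In the model (c) preferential attachment graph process, fix k ≥ 1 distinct vertices s₁,…,s_k, and for each s ∈ {s₁,…,s_k} let E_s = ⋂_{i=1}^{n_s} {g(t_i,j_i) = s} be an intersection of attachment events with target s (for arbitrary choices of times t_i and edge indices j_i ∈ {1,…,m}). Then P(⋂_{i=1}^k E_{s_i}) ≤ ∏_{i=1}^k P(E_{s_i}); that is, the events E_{s₁},…,E_{s_k} are negatively correlated. -/
open MeasureTheory Filter
open scoped ENNReal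

namespace PA

/-- The degree of vertex `i` at time `t` in the model (c) preferential attachment graph,
encoded by the attachment function `g`, where for `s ≥ 3` and `j < m`, `g s j` is the
vertex that the `j`-th edge of vertex `s` attaches to. Vertices `1` and `2` start with
`2m` edges between them. -/
def degree (m : ℕ) (g : ℕ → ℕ → ℕ) (i t : ℕ) : ℕ :=
  (if i ≤ 2 then 2 * m else m) +
    ((Finset.Ioc (max i 2) t ×ˢ Finset.range m).filter fun p => g p.1 p.2 = i).card

/-- `IsPAc m δ μ` states that `μ` is the law of the model (c) preferential attachment
process `{G_{m,δ}(t)}`, encoded through the attachment function `g : ℕ → ℕ → ℕ`: the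
finite-dimensional distributions are given by the product of the conditional attachment
probabilities `(D_i(s-1) + δ) / ((s-1)(2m + δ))`. -/
def IsPAc (m : ℕ) (δ : ℝ) (μ : Measure (ℕ → ℕ → ℕ)) : Prop :=
  IsProbabilityMeasure μ ∧
    ∀ t : ℕ, 2 ≤ t → ∀ h : ℕ → ℕ → ℕ,
      μ {g | ∀ s ∈ Finset.Ioc 2 t, ∀ j ∈ Finset.range m, g s j = h s j} =
        ∏ s ∈ Finset.Ioc 2 t, ∏ j ∈ Finset.range m,
          (if h s j ∈ Finset.Icc 1 (s - 1) then
            ENNReal.ofReal (((degree m h (h s j) (s - 1) : ℝ) + δ) /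
              (((s : ℝ) - 1) * (2 * m + δ)))
          else 0)

/-- The (simple) graph `G_{m,δ}(t)` on vertex set `[t] = {1,…,t}` determined by the
attachment function `g`. -/
def PAGraph (m : ℕ) (g : ℕ → ℕ → ℕ) (t : ℕ) : SimpleGraph ℕ where
  Adj a b := a ≠ b ∧ a ∈ Finset.Icc 1 t ∧ b ∈ Finset.Icc 1 t ∧
    ((a = 1 ∧ b = 2) ∨ (a = 2 ∧ b = 1) ∨
      (3 ≤ a ∧ ∃ j < m, g a j = b) ∨ (3 ≤ b ∧ ∃ j < m, g b j = a))
  symm := by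
    constructor
    rintro a b ⟨hab, ha, hb, h⟩
    refine ⟨hab.symm, hb, ha, ?_⟩
    rcases h with h | h | h | h
    · exact Or.inr (Or.inl ⟨h.2, h.1⟩)
    · exact Or.inl ⟨h.2, h.1⟩
    · exact Or.inr (Or.inr (Or.inr h))
    · exact Or.inr (Or.inr (Or.inl h))
  loopless := by constructor; rintro a ⟨hne, -⟩; exact hne rfl

/-- The diameter of `G_{m,δ}(t)`: the supremum of the graph distances over pairs of
vertices at finite distance from each other. -/
noncomputable def diam (m : ℕ) (g : ℕ → ℕ → ℕ) (t : ℕ) : ℝ≥0∞ :=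
  ⨆ (a : ℕ) (b : ℕ) (_ : (PAGraph m g t).Reachable a b),
    ((PAGraph m g t).edist a b : ℝ≥0∞)

/-- The core: vertices in `[t]` whose degree at time `t` is at least `(log t)^σ`. -/
noncomputable def core (m : ℕ) (σ : ℝ) (g : ℕ → ℕ → ℕ) (t : ℕ) : Finset ℕ :=
  (Finset.Icc 1 t).filter fun i => (Real.log t) ^ σ ≤ (degree m g i t : ℝ)

/-- The inner core: vertices in `[t]` whose degree at time `t` is at least
`u₁ = t^{1/(2(τ-1))} (log t)^{-1/2}`. -/
noncomputable def inner (m : ℕ) (τ : ℝ) (g : ℕ → ℕ → ℕ) (t : ℕ) : Finset ℕ :=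
  (Finset.Icc 1 t).filter fun i =>
    (t : ℝ) ^ (1 / (2 * (τ - 1))) * (Real.log t) ^ (-(1:ℝ)/2) ≤ (degree m g i t : ℝ)

end PA

/-!
Enumerate the edge slots `(t, j)` chronologically. The probability of an event determined by
the first `n` slots is a finite sum, over the configurations of these slots, of products of
conditional attachment probabilities; the bound is proved for these sums by induction on `n`.
If the last slot is unconstrained, summing out its attachment changes nothing, as the
conditional probabilities sum to one. If it is constrained to attach to `s = sᵢ`, then, since
`D_s` is its initial degree plus the number of earlier slots pointing to `s`, summing it out
gives for every event `A` of the earlier slots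
  `P(A ∩ {slot n ↦ s}) = a P(A) + b ∑_q P(A ∩ {q ↦ s})`,
over the earlier slots `q` that may point to `s`, with `a, b ≥ 0` depending on `s` only.
Applying this both to `E_s` and to `E_s ∩ ⋂_{j ≠ i} E_{s_j}`, and the induction hypothesis to
each term, gives the bound; the other vertices `s_j ≠ s` never enter the coefficients.
-/
namespace PA

open Finset

variable {m : ℕ} {δ : ℝ}

/-- Chronological enumeration of the edge slots `(t, j)` with `3 ≤ t` and `j < m`. -/
def slot (m a : ℕ) : ℕ × ℕ := (3 + a / m, a % m)

def firstSlots (m n : ℕ) : Finset (ℕ × ℕ) := (range n).image (slot m)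

/-- The slots whose edges count towards `degree m h v t`. -/
def laterSlots (m v t : ℕ) : Finset (ℕ × ℕ) := Ioc (max v 2) t ×ˢ range m

theorem slot_injective : Function.Injective (slot m) := by
  intro a b hab
  obtain ⟨hdiv, hmod⟩ := Prod.mk.inj hab
  rw [← Nat.div_add_mod a m, ← Nat.div_add_mod b m, Nat.add_left_cancel hdiv, hmod]

theorem slot_fst_sub_one (n : ℕ) : (slot m n).1 - 1 = 2 + n / m := by
  show 3 + n / m - 1 = 2 + n / m
  generalize n / m = q
  omega

theorem slot_fst_sub_one_lt {a n : ℕ} (h : a ≤ n) : (slot m a).1 - 1 < (slot m n).1 := by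
  have := Nat.div_le_div_right (c := m) h
  simp only [slot]
  generalize a / m = x at this
  omega

theorem slot_notMem_firstSlots (n : ℕ) : slot m n ∉ firstSlots m n := by
  simp [firstSlots, slot_injective.eq_iff]

theorem firstSlots_succ (n : ℕ) :
    firstSlots m (n + 1) = insert (slot m n) (firstSlots m n) := by
  rw [firstSlots, range_add_one, image_insert, firstSlots]

theorem firstSlots_mul (hm : 0 < m) (t : ℕ) :
    firstSlots m (t * m) = Ioc 2 (2 + t) ×ˢ range m := by
  ext ⟨u, j⟩
  simp only [firstSlots, slot, mem_image, mem_range, mem_product, mem_Ioc, Prod.mk.injEq]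
  constructor
  · rintro ⟨a, ha, rfl, rfl⟩
    have : a / m < t := Nat.div_lt_of_lt_mul (by rwa [mul_comm])
    generalize a / m = q at this
    exact ⟨⟨by omega, by omega⟩, Nat.mod_lt a hm⟩
  · rintro ⟨hu, hj⟩
    have hdiv : ((u - 3) * m + j) / m = u - 3 := by
      rw [Nat.add_comm, Nat.add_mul_div_right _ _ hm, Nat.div_eq_of_lt hj, zero_add]
    refine ⟨(u - 3) * m + j, ?_, by omega, ?_⟩
    · calc (u - 3) * m + j < (u - 3 + 1) * m := by rw [add_one_mul]; omega
        _ ≤ t * m := Nat.mul_le_mul_right m (by omega)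
    · rw [Nat.add_comm, Nat.add_mul_mod_self_right, Nat.mod_eq_of_lt hj]

theorem Ioc_product_range_subset_firstSlots (hm : 0 < m) (n : ℕ) :
    Ioc 2 (2 + n / m) ×ˢ range m ⊆ firstSlots m n := by
  rw [← firstSlots_mul hm]
  exact image_subset_image (range_subset_range.mpr (Nat.div_mul_le_self n m))

def updateAt (h : ℕ → ℕ → ℕ) (p : ℕ × ℕ) (v : ℕ) : ℕ → ℕ → ℕ :=
  fun u j => if (u, j) = p then v else h u j

@[simp]
theorem updateAt_self (h : ℕ → ℕ → ℕ) (p : ℕ × ℕ) (v : ℕ) : updateAt h p v p.1 p.2 = v :=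
  if_pos rfl

theorem updateAt_of_ne (h : ℕ → ℕ → ℕ) {p q : ℕ × ℕ} (v : ℕ) (hq : q ≠ p) :
    updateAt h p v q.1 q.2 = h q.1 q.2 :=
  if_neg hq

theorem degree_updateAt (h : ℕ → ℕ → ℕ) {p : ℕ × ℕ} (v w : ℕ) {t : ℕ} (ht : t < p.1) :
    degree m (updateAt h p v) w t = degree m h w t := by
  unfold degree
  congr 2
  refine filter_congr fun q hq => ?_
  rw [updateAt_of_ne h v]
  rintro rfl
  simp only [mem_product, mem_Ioc] at hq
  omega

theorem le_degree (h : ℕ → ℕ → ℕ) (v t : ℕ) : m ≤ degree m h v t := by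
  unfold degree
  split_ifs <;> omega

theorem sum_initialDegree {t : ℕ} (ht : 2 ≤ t) :
    ∑ v ∈ Icc 1 t, (if v ≤ 2 then 2 * m else m) = m * t + 2 * m := by
  have hsplit : ∀ v : ℕ, (if v ≤ 2 then 2 * m else m) = m + if v ≤ 2 then m else 0 := by
    intro v
    split_ifs <;> ring
  have hlow : {v ∈ Icc 1 t | v ≤ 2} = Icc 1 2 := by
    ext v
    simp only [mem_filter, mem_Icc]
    omega
  simp only [hsplit, sum_add_distrib, sum_const, Nat.card_Icc, smul_eq_mul, ← sum_filter, hlow,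
    add_tsub_cancel_right]
  ring

theorem sum_degree {h : ℕ → ℕ → ℕ} {t : ℕ} (ht : 2 ≤ t)
    (hh : ∀ p ∈ Ioc 2 t ×ˢ range m, h p.1 p.2 ∈ Icc 1 (p.1 - 1)) :
    ∑ v ∈ Icc 1 t, degree m h v t = 2 * m * t := by
  have hfiber : ∀ v, {q ∈ Ioc 2 t ×ˢ range m | h q.1 q.2 = v} =
      {q ∈ laterSlots m v t | h q.1 q.2 = v} := by
    intro v
    ext q
    simp only [laterSlots, mem_filter, mem_product, mem_Ioc, max_lt_iff]
    constructor
    · rintro ⟨hq, rfl⟩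
      have := mem_Icc.mp (hh q (by simp only [mem_product, mem_Ioc]; exact hq))
      exact ⟨⟨⟨⟨by omega, hq.1.1⟩, hq.1.2⟩, hq.2⟩, rfl⟩
    · rintro ⟨⟨⟨⟨-, hq⟩, hqt⟩, hj⟩, hv⟩
      exact ⟨⟨⟨hq, hqt⟩, hj⟩, hv⟩
  have hmaps : Set.MapsTo (fun q : ℕ × ℕ => h q.1 q.2) ↑(Ioc 2 t ×ˢ range m) ↑(Icc 1 t) := by
    intro q hq
    have hqt := (mem_Ioc.mp (mem_product.mp hq).1).2
    have := mem_Icc.mp (hh q hq)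
    simp only [coe_Icc, Set.mem_Icc]
    omega
  have hedges : ∑ v ∈ Icc 1 t, #{q ∈ laterSlots m v t | h q.1 q.2 = v} = (t - 2) * m := by
    rw [← sum_congr rfl fun v _ => congrArg card (hfiber v), ← card_eq_sum_card_fiberwise hmaps,
      card_product, Nat.card_Ioc, card_range]
  simp only [degree, sum_add_distrib, sum_initialDegree ht]
  change m * t + 2 * m + ∑ v ∈ Icc 1 t, #{q ∈ laterSlots m v t | h q.1 q.2 = v} = _
  obtain ⟨r, rfl⟩ := Nat.exists_eq_add_of_le ht
  rw [hedges, Nat.add_sub_cancel_left]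
  ring

/-- The attachment configurations of the first `n` slots: every slot points to an earlier
vertex, and `0` is stored at all other slots. -/
noncomputable def configs (m : ℕ) : ℕ → Finset (ℕ → ℕ → ℕ)
  | 0 => {fun _ _ => 0}
  | n + 1 => open Classical in
      (configs m n ×ˢ Icc 1 (2 + n / m)).image fun q => updateAt q.1 (slot m n) q.2

def IsConfig (m n : ℕ) (h : ℕ → ℕ → ℕ) : Prop :=
  (∀ p ∈ firstSlots m n, h p.1 p.2 ∈ Icc 1 (p.1 - 1)) ∧ ∀ p ∉ firstSlots m n, h p.1 p.2 = 0

theorem isConfig_of_mem_configs {n : ℕ} {h : ℕ → ℕ → ℕ} (hh : h ∈ configs m n) :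
    IsConfig m n h := by
  induction n generalizing h with
  | zero =>
    rw [configs, mem_singleton] at hh
    subst hh
    exact ⟨by simp [firstSlots], fun _ _ => rfl⟩
  | succ n ih =>
    simp only [configs, mem_image, mem_product] at hh
    obtain ⟨⟨h', v⟩, ⟨hh', hv⟩, rfl⟩ := hh
    obtain ⟨ih₁, ih₀⟩ := ih hh'
    rw [IsConfig, firstSlots_succ]
    refine ⟨fun p hp => ?_, fun p hp => ?_⟩
    · rcases mem_insert.mp hp with rfl | hp
      · rwa [updateAt_self, slot_fst_sub_one]
      · rw [updateAt_of_ne _ _ (ne_of_mem_of_not_mem hp (slot_notMem_firstSlots n))]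
        exact ih₁ p hp
    · rw [mem_insert, not_or] at hp
      rw [updateAt_of_ne _ _ hp.1]
      exact ih₀ p hp.2

/-- The probability that an edge of vertex `t + 1` attaches to `v`, given the graph at
time `t`. -/
noncomputable def attachProb (m : ℕ) (δ : ℝ) (h : ℕ → ℕ → ℕ) (t v : ℕ) : ℝ≥0∞ :=
  ENNReal.ofReal (((degree m h v t : ℝ) + δ) / (t * (2 * m + δ)))

noncomputable def attachWeight (m : ℕ) (δ : ℝ) (h : ℕ → ℕ → ℕ) (p : ℕ × ℕ) : ℝ≥0∞ :=
  if h p.1 p.2 ∈ Icc 1 (p.1 - 1) then attachProb m δ h (p.1 - 1) (h p.1 p.2) else 0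

noncomputable def pathWeight (m : ℕ) (δ : ℝ) (n : ℕ) (h : ℕ → ℕ → ℕ) : ℝ≥0∞ :=
  ∏ a ∈ range n, attachWeight m δ h (slot m a)

theorem attachProb_updateAt (h : ℕ → ℕ → ℕ) {p : ℕ × ℕ} (v : ℕ) {t : ℕ} (ht : t < p.1)
    (w : ℕ) : attachProb m δ (updateAt h p v) t w = attachProb m δ h t w := by
  rw [attachProb, attachProb, degree_updateAt h v w ht]

theorem pathWeight_succ_updateAt (h : ℕ → ℕ → ℕ) {n v : ℕ} (hv : v ∈ Icc 1 (2 + n / m)) :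
    pathWeight m δ (n + 1) (updateAt h (slot m n) v) =
      pathWeight m δ n h * attachProb m δ h (2 + n / m) v := by
  rw [pathWeight, prod_range_succ]
  congr 1
  · refine prod_congr rfl fun a ha => ?_
    have ha : a < n := mem_range.mp ha
    simp only [attachWeight, updateAt_of_ne h v (slot_injective.ne ha.ne),
      attachProb_updateAt h v (slot_fst_sub_one_lt ha.le)]
  · rw [attachWeight, updateAt_self, slot_fst_sub_one, if_pos hv, ← slot_fst_sub_one,
      attachProb_updateAt h v (slot_fst_sub_one_lt le_rfl)]

theorem sum_attachProb (hδ : -(m : ℝ) < δ) {h : ℕ → ℕ → ℕ} {t : ℕ} (ht : 2 ≤ t)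
    (hh : ∀ p ∈ Ioc 2 t ×ˢ range m, h p.1 p.2 ∈ Icc 1 (p.1 - 1)) :
    ∑ v ∈ Icc 1 t, attachProb m δ h t v = 1 := by
  have hD : (0 : ℝ) < t * (2 * m + δ) := by
    have : (2 : ℝ) ≤ t := by exact_mod_cast ht
    have : (0 : ℝ) ≤ m := m.cast_nonneg
    apply mul_pos <;> linarith
  have hnum : ∀ v, 0 ≤ ((degree m h v t : ℝ) + δ) / (t * (2 * m + δ)) := fun v => by
    have : (m : ℝ) ≤ degree m h v t := by exact_mod_cast le_degree h v t
    exact div_nonneg (by linarith) hD.le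
  simp only [attachProb]
  rw [← ENNReal.ofReal_sum_of_nonneg fun v _ => hnum v, ← sum_div, sum_add_distrib,
    ← Nat.cast_sum, sum_degree ht hh, sum_const, Nat.card_Icc, Nat.add_sub_cancel, nsmul_eq_mul,
    ← ENNReal.ofReal_one, ← div_self hD.ne']
  congr 1
  push_cast
  ring

theorem attachProb_eq_add_sum (hδ : -(m : ℝ) < δ) (h : ℕ → ℕ → ℕ) (t v : ℕ) :
    attachProb m δ h t v =
      ENNReal.ofReal ((((if v ≤ 2 then 2 * m else m : ℕ) : ℝ) + δ) / (t * (2 * m + δ))) +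
        ∑ q ∈ laterSlots m v t,
          if h q.1 q.2 = v then ENNReal.ofReal (1 / (t * (2 * m + δ))) else 0 := by
  have hD : (0 : ℝ) ≤ t * (2 * m + δ) := by
    have : (0 : ℝ) ≤ m := m.cast_nonneg
    apply mul_nonneg <;> linarith [t.cast_nonneg (α := ℝ)]
  have hbase : (0 : ℝ) ≤ ((if v ≤ 2 then 2 * m else m : ℕ) : ℝ) + δ := by
    have : (m : ℝ) ≤ ((if v ≤ 2 then 2 * m else m : ℕ) : ℝ) := by
      exact_mod_cast (show m ≤ if v ≤ 2 then 2 * m else m by split_ifs <;> omega)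
    linarith
  rw [← sum_filter, sum_const, nsmul_eq_mul, ← ENNReal.ofReal_natCast,
    ← ENNReal.ofReal_mul (Nat.cast_nonneg _), ← ENNReal.ofReal_add (div_nonneg hbase hD)
      (mul_nonneg (Nat.cast_nonneg _) (div_nonneg zero_le_one hD)), attachProb, degree,
    laterSlots]
  congr 1
  push_cast
  ring

/-- The probability of `A` under the law of the first `n` slots. -/
noncomputable def weight (m : ℕ) (δ : ℝ) (n : ℕ) (A : Set (ℕ → ℕ → ℕ)) : ℝ≥0∞ :=
  ∑ h ∈ configs m n, A.indicator (pathWeight m δ n) h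

def IsDeterminedBy (S : Set (ℕ × ℕ)) (A : Set (ℕ → ℕ → ℕ)) : Prop :=
  ∀ ⦃g h : ℕ → ℕ → ℕ⦄, (∀ p ∈ S, g p.1 p.2 = h p.1 p.2) → g ∈ A → h ∈ A

theorem IsDeterminedBy.mono {S T : Set (ℕ × ℕ)} {A : Set (ℕ → ℕ → ℕ)}
    (hA : IsDeterminedBy S A) (hST : S ⊆ T) : IsDeterminedBy T A :=
  fun _ _ hgh => hA fun p hp => hgh p (hST hp)

theorem IsDeterminedBy.inter {S : Set (ℕ × ℕ)} {A B : Set (ℕ → ℕ → ℕ)}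
    (hA : IsDeterminedBy S A) (hB : IsDeterminedBy S B) : IsDeterminedBy S (A ∩ B) :=
  fun _ _ hgh hg => ⟨hA hgh hg.1, hB hgh hg.2⟩

theorem IsDeterminedBy.iInter {ι : Sort*} {S : Set (ℕ × ℕ)} {A : ι → Set (ℕ → ℕ → ℕ)}
    (hA : ∀ i, IsDeterminedBy S (A i)) : IsDeterminedBy S (⋂ i, A i) :=
  fun _ _ hgh hg => Set.mem_iInter.mpr fun i => hA i hgh (Set.mem_iInter.mp hg i)

theorem IsDeterminedBy.updateAt_mem_iff {S : Set (ℕ × ℕ)} {A : Set (ℕ → ℕ → ℕ)}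
    (hA : IsDeterminedBy S A) {p : ℕ × ℕ} (hp : p ∉ S) (h : ℕ → ℕ → ℕ) (v : ℕ) :
    updateAt h p v ∈ A ↔ h ∈ A :=
  ⟨hA fun _ hq => updateAt_of_ne h v (ne_of_mem_of_not_mem hq hp),
    hA fun _ hq => (updateAt_of_ne h v (ne_of_mem_of_not_mem hq hp)).symm⟩

theorem weight_mono {n : ℕ} {A B : Set (ℕ → ℕ → ℕ)} (hAB : A ⊆ B) :
    weight m δ n A ≤ weight m δ n B :=
  sum_le_sum fun h _ => Set.indicator_le_indicator_of_subset hAB (fun _ => zero_le) h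

open Classical in
theorem weight_succ (n : ℕ) (A : Set (ℕ → ℕ → ℕ)) :
    weight m δ (n + 1) A = ∑ h ∈ configs m n, ∑ v ∈ Icc 1 (2 + n / m),
      if updateAt h (slot m n) v ∈ A then
        pathWeight m δ n h * attachProb m δ h (2 + n / m) v
      else 0 := by
  have hinj : Set.InjOn (fun q : (ℕ → ℕ → ℕ) × ℕ => updateAt q.1 (slot m n) q.2)
      ↑(configs m n ×ˢ Icc 1 (2 + n / m)) := by
    rintro ⟨h, v⟩ hq ⟨h', v'⟩ hq' heq
    simp only [coe_product, Set.mem_prod, mem_coe] at hq hq' heq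
    have hv : v = v' := by
      simpa using congrFun (congrFun heq (slot m n).1) (slot m n).2
    refine Prod.ext (funext₂ fun u j => ?_) hv
    by_cases hp : (u, j) = slot m n
    · have hfree := slot_notMem_firstSlots (m := m) n
      rw [← hp] at hfree
      exact ((isConfig_of_mem_configs hq.1).2 _ hfree).trans
        ((isConfig_of_mem_configs hq'.1).2 _ hfree).symm
    · simpa [updateAt_of_ne _ _ hp] using congrFun (congrFun heq u) j
  rw [weight, configs, sum_image hinj, sum_product]
  refine sum_congr rfl fun h _ => sum_congr rfl fun v hv => ?_
  rw [Set.indicator_apply, pathWeight_succ_updateAt h hv]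

theorem sum_attachProb_of_mem_configs (hm : 0 < m) (hδ : -(m : ℝ) < δ) {n : ℕ}
    {h : ℕ → ℕ → ℕ} (hh : h ∈ configs m n) :
    ∑ v ∈ Icc 1 (2 + n / m), attachProb m δ h (2 + n / m) v = 1 :=
  sum_attachProb hδ (Nat.le_add_right 2 _) fun p hp =>
    (isConfig_of_mem_configs hh).1 p (Ioc_product_range_subset_firstSlots hm n hp)

theorem weight_succ_of_isDeterminedBy (hm : 0 < m) (hδ : -(m : ℝ) < δ) {n : ℕ}
    {A : Set (ℕ → ℕ → ℕ)} (hA : IsDeterminedBy (firstSlots m n) A) :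
    weight m δ (n + 1) A = weight m δ n A := by
  classical
  rw [weight_succ, weight]
  refine sum_congr rfl fun h hh => ?_
  simp only [hA.updateAt_mem_iff (slot_notMem_firstSlots n), Set.indicator_apply]
  split_ifs
  · rw [← mul_sum, sum_attachProb_of_mem_configs hm hδ hh, mul_one]
  · exact sum_const_zero

theorem weight_univ (hm : 0 < m) (hδ : -(m : ℝ) < δ) (n : ℕ) :
    weight m δ n Set.univ = 1 := by
  induction n with
  | zero => simp [weight, configs, pathWeight]
  | succ n ih =>
    rwa [weight_succ_of_isDeterminedBy hm hδ (fun _ _ _ _ => trivial : IsDeterminedBy _ Set.univ)]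

theorem weight_slot_eq_zero {n v : ℕ} (hv : v ∉ Icc 1 (2 + n / m)) :
    weight m δ (n + 1) {h | h (slot m n).1 (slot m n).2 = v} = 0 := by
  refine sum_eq_zero fun h hh => Set.indicator_of_notMem (fun hv' => hv ?_) _
  have := (isConfig_of_mem_configs hh).1 (slot m n) (by simp [firstSlots_succ])
  rwa [slot_fst_sub_one, show h (slot m n).1 (slot m n).2 = v from hv'] at this

theorem weight_succ_inter_slot (hδ : -(m : ℝ) < δ) {n v : ℕ} {A : Set (ℕ → ℕ → ℕ)}
    (hA : IsDeterminedBy (firstSlots m n) A) (hv : v ∈ Icc 1 (2 + n / m)) :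
    weight m δ (n + 1) (A ∩ {h | h (slot m n).1 (slot m n).2 = v}) =
      ENNReal.ofReal ((((if v ≤ 2 then 2 * m else m : ℕ) : ℝ) + δ) /
          ((2 + n / m : ℕ) * (2 * m + δ))) * weight m δ n A +
        ENNReal.ofReal (1 / ((2 + n / m : ℕ) * (2 * m + δ))) *
          ∑ q ∈ laterSlots m v (2 + n / m), weight m δ n (A ∩ {h | h q.1 q.2 = v}) := by
  classical
  have hmem : ∀ h w, updateAt h (slot m n) w ∈ A ∩ {g | g (slot m n).1 (slot m n).2 = v} ↔
      w = v ∧ h ∈ A := by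
    intro h w
    rw [Set.mem_inter_iff, hA.updateAt_mem_iff (slot_notMem_firstSlots n), Set.mem_ofPred_eq,
      updateAt_self, and_comm]
  rw [weight_succ]
  simp only [hmem, ite_and, sum_ite_eq', if_pos hv]
  simp only [weight, mul_sum]
  rw [sum_comm, ← sum_add_distrib]
  refine sum_congr rfl fun h _ => ?_
  rw [attachProb_eq_add_sum hδ]
  by_cases hA : h ∈ A <;> simp [hA, Set.indicator_apply, mul_add, mul_sum, mul_comm]

theorem attachWeight_eq (h : ℕ → ℕ → ℕ) (s j : ℕ) :
    attachWeight m δ h (s, j) =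
      if h s j ∈ Icc 1 (s - 1) then
        ENNReal.ofReal (((degree m h (h s j) (s - 1) : ℝ) + δ) / (((s : ℝ) - 1) * (2 * m + δ)))
      else 0 := by
  unfold attachWeight attachProb
  split_ifs with hs
  · rw [Nat.cast_sub (by rw [mem_Icc] at hs; omega), Nat.cast_one]
  · rfl

theorem pathWeight_mul_eq_prod (hm : 0 < m) (t : ℕ) (h : ℕ → ℕ → ℕ) :
    pathWeight m δ (t * m) h =
      ∏ s ∈ Ioc 2 (2 + t), ∏ j ∈ range m,
        if h s j ∈ Icc 1 (s - 1) then
          ENNReal.ofReal (((degree m h (h s j) (s - 1) : ℝ) + δ) / (((s : ℝ) - 1) * (2 * m + δ)))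
        else 0 := by
  simp_rw [← attachWeight_eq]
  rw [← prod_product (f := fun p => attachWeight m δ h p), ← firstSlots_mul hm, firstSlots,
    prod_image slot_injective.injOn, pathWeight]

def cylinder (m n : ℕ) (h : ℕ → ℕ → ℕ) : Set (ℕ → ℕ → ℕ) :=
  {g | ∀ p ∈ firstSlots m n, g p.1 p.2 = h p.1 p.2}

theorem pairwiseDisjoint_cylinder (n : ℕ) :
    (configs m n : Set (ℕ → ℕ → ℕ)).PairwiseDisjoint (cylinder m n) := by
  intro h hh h' hh' hne
  refine Set.disjoint_left.mpr fun g hg hg' => hne (funext₂ fun u j => ?_)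
  by_cases hp : (u, j) ∈ firstSlots m n
  · exact (hg _ hp).symm.trans (hg' _ hp)
  · exact ((isConfig_of_mem_configs hh).2 _ hp).trans
      ((isConfig_of_mem_configs hh').2 _ hp).symm

theorem measure_cylinder (hm : 0 < m) {μ : Measure (ℕ → ℕ → ℕ)} (hμ : IsPAc m δ μ)
    (t : ℕ) (h : ℕ → ℕ → ℕ) : μ (cylinder m (t * m) h) = pathWeight m δ (t * m) h := by
  rw [pathWeight_mul_eq_prod hm, ← hμ.2 (2 + t) (Nat.le_add_right 2 t) h]
  congr 1
  ext g
  simp only [cylinder, firstSlots_mul hm, mem_product, Prod.forall, and_imp]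
  exact ⟨fun H s hs j hj => H s j hs hj, fun H s j hs hj => H s hs j hj⟩

theorem measure_eq_weight (hm : 0 < m) (hδ : -(m : ℝ) < δ) {μ : Measure (ℕ → ℕ → ℕ)}
    (hμ : IsPAc m δ μ) (t : ℕ) {A : Set (ℕ → ℕ → ℕ)}
    (hA : IsDeterminedBy (firstSlots m (t * m)) A) :
    μ A = weight m δ (t * m) A := by
  classical
  have := hμ.1
  set U := ⋃ h ∈ configs m (t * m), cylinder m (t * m) h
  have hmeas : ∀ h, MeasurableSet (cylinder m (t * m) h) := fun h => by
    unfold cylinder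
    measurability
  have hU : μ Uᶜ = 0 := by
    rw [prob_compl_eq_zero_iff (Finset.measurableSet_biUnion _ fun h _ => hmeas h),
      measure_biUnion_finset (pairwiseDisjoint_cylinder _) fun h _ => hmeas h]
    simpa [measure_cylinder hm hμ, weight] using weight_univ hm hδ (t * m)
  have hAU : A ∩ U = ⋃ h ∈ (configs m (t * m)).filter (· ∈ A), cylinder m (t * m) h := by
    ext g
    simp only [U, Set.mem_inter_iff, Set.mem_iUnion, mem_filter, exists_prop]
    constructor
    · rintro ⟨hg, h, hh, hgh⟩
      exact ⟨h, ⟨hh, hA hgh hg⟩, hgh⟩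
    · rintro ⟨h, ⟨hh, hhA⟩, hgh⟩
      exact ⟨hA (fun p hp => (hgh p hp).symm) hhA, h, hh, hgh⟩
  rw [← measure_inter_conull hU, hAU,
    measure_biUnion_finset ((pairwiseDisjoint_cylinder _).subset (filter_subset _ _))
      fun h _ => hmeas h, weight, sum_filter]
  simp [measure_cylinder hm hμ, Set.indicator_apply]

def attachEvent (Q : Finset (ℕ × ℕ)) (v : ℕ) : Set (ℕ → ℕ → ℕ) :=
  {h | ∀ q ∈ Q, h q.1 q.2 = v}

theorem attachEvent_empty (v : ℕ) : attachEvent ∅ v = Set.univ := by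
  simp [attachEvent]

theorem attachEvent_insert (q : ℕ × ℕ) (Q : Finset (ℕ × ℕ)) (v : ℕ) :
    attachEvent (insert q Q) v = attachEvent Q v ∩ {h | h q.1 q.2 = v} := by
  ext h
  simp [attachEvent, and_comm]

theorem isDeterminedBy_attachEvent (Q : Finset (ℕ × ℕ)) (v : ℕ) :
    IsDeterminedBy Q (attachEvent Q v) :=
  fun _ _ hgh hg q hq => (hgh q hq).symm.trans (hg q hq)

theorem iInter_attachEvent_update {ι : Type*} [DecidableEq ι] (Q : ι → Finset (ℕ × ℕ))
    (s : ι → ℕ) (i₀ : ι) (Y : Finset (ℕ × ℕ)) :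
    ⋂ i, attachEvent (Function.update Q i₀ Y i) (s i) =
      attachEvent Y (s i₀) ∩ ⋂ (j) (_ : j ≠ i₀), attachEvent (Q j) (s j) := by
  ext g
  simp only [Set.mem_iInter, Set.mem_inter_iff]
  exact Function.forall_update_iff Q fun i Y => g ∈ attachEvent Y (s i)

section Family

variable {ι : Type*} [Fintype ι] [DecidableEq ι] {s : ι → ℕ} {n : ℕ}

theorem weight_inter_iInter_le_of_update
    (ih : ∀ Q : ι → Finset (ℕ × ℕ), (∀ i, Q i ⊆ firstSlots m n) →
      weight m δ n (⋂ i, attachEvent (Q i) (s i)) ≤ ∏ i, weight m δ n (attachEvent (Q i) (s i)))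
    {Q : ι → Finset (ℕ × ℕ)} {i₀ : ι} (hQ : ∀ j ≠ i₀, Q j ⊆ firstSlots m n)
    {Y : Finset (ℕ × ℕ)} (hY : Y ⊆ firstSlots m n) :
    weight m δ n (attachEvent Y (s i₀) ∩ ⋂ (j) (_ : j ≠ i₀), attachEvent (Q j) (s j)) ≤
      weight m δ n (attachEvent Y (s i₀)) *
        ∏ j ∈ {i₀}ᶜ, weight m δ n (attachEvent (Q j) (s j)) := by
  have := ih (Function.update Q i₀ Y) fun j => by
    rcases eq_or_ne j i₀ with rfl | hj
    · rwa [Function.update_self]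
    · rw [Function.update_of_ne hj]
      exact hQ j hj
  rwa [iInter_attachEvent_update, Fintype.prod_eq_mul_prod_compl i₀, Function.update_self,
    prod_congr rfl fun j hj => by rw [Function.update_of_ne (by simpa using hj)]] at this

theorem weight_succ_iInter_le_of_slot_mem (hm : 0 < m) (hδ : -(m : ℝ) < δ)
    (ih : ∀ Q : ι → Finset (ℕ × ℕ), (∀ i, Q i ⊆ firstSlots m n) →
      weight m δ n (⋂ i, attachEvent (Q i) (s i)) ≤ ∏ i, weight m δ n (attachEvent (Q i) (s i)))
    {Q : ι → Finset (ℕ × ℕ)} (hQ : ∀ i, Q i ⊆ firstSlots m (n + 1)) {i₀ : ι}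
    (hi₀ : slot m n ∈ Q i₀) (hothers : ∀ j ≠ i₀, slot m n ∉ Q j) :
    weight m δ (n + 1) (⋂ i, attachEvent (Q i) (s i)) ≤
      ∏ i, weight m δ (n + 1) (attachEvent (Q i) (s i)) := by
  set X := (Q i₀).erase (slot m n)
  set v := s i₀
  set R := ⋂ (j) (_ : j ≠ i₀), attachEvent (Q j) (s j)
  have hQj : ∀ j ≠ i₀, Q j ⊆ firstSlots m n := fun j hj =>
    (subset_insert_iff_of_notMem (hothers j hj)).mp (firstSlots_succ n ▸ hQ j)
  have hX : X ⊆ firstSlots m n := subset_insert_iff.mp (firstSlots_succ n ▸ hQ i₀)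
  have hXdet : IsDeterminedBy (firstSlots m n) (attachEvent X v) :=
    (isDeterminedBy_attachEvent X v).mono (coe_subset.mpr hX)
  have hRdet : IsDeterminedBy (firstSlots m n) R := IsDeterminedBy.iInter fun j =>
    IsDeterminedBy.iInter fun hj =>
      (isDeterminedBy_attachEvent _ _).mono (coe_subset.mpr (hQj j hj))
  have hsplit : ⋂ i, attachEvent (Q i) (s i) =
      (attachEvent X v ∩ R) ∩ {h | h (slot m n).1 (slot m n).2 = v} := by
    rw [← Function.update_eq_self i₀ Q, iInter_attachEvent_update, ← insert_erase hi₀,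
      attachEvent_insert, Set.inter_right_comm]
  have hrest : ∏ j ∈ {i₀}ᶜ, weight m δ (n + 1) (attachEvent (Q j) (s j)) =
      ∏ j ∈ {i₀}ᶜ, weight m δ n (attachEvent (Q j) (s j)) :=
    prod_congr rfl fun j hj => weight_succ_of_isDeterminedBy hm hδ
      ((isDeterminedBy_attachEvent _ _).mono (coe_subset.mpr (hQj j (by simpa using hj))))
  rw [Fintype.prod_eq_mul_prod_compl i₀, hrest, hsplit]
  by_cases hv : v ∈ Icc 1 (2 + n / m)
  · rw [weight_succ_inter_slot hδ (hXdet.inter hRdet) hv, ← insert_erase hi₀,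
      attachEvent_insert, weight_succ_inter_slot hδ hXdet hv, add_mul, mul_assoc, mul_assoc,
      sum_mul]
    gcongr with q hq
    · exact weight_inter_iInter_le_of_update ih hQj hX
    · have hq' : q ∈ Ioc 2 (2 + n / m) ×ˢ range m := by
        simp only [laterSlots, mem_product, mem_Ioc, max_lt_iff] at hq ⊢
        exact ⟨⟨hq.1.1.2, hq.1.2⟩, hq.2⟩
      rw [Set.inter_right_comm, ← attachEvent_insert]
      exact weight_inter_iInter_le_of_update ih hQj
        (insert_subset (Ioc_product_range_subset_firstSlots hm n hq') hX)
  · calc weight m δ (n + 1) (attachEvent X v ∩ R ∩ {h | h (slot m n).1 (slot m n).2 = v})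
        ≤ weight m δ (n + 1) {h | h (slot m n).1 (slot m n).2 = v} :=
          weight_mono Set.inter_subset_right
      _ = 0 := weight_slot_eq_zero hv
      _ ≤ _ := zero_le

theorem weight_iInter_attachEvent_le_prod (hm : 0 < m) (hδ : -(m : ℝ) < δ)
    (hs : Function.Injective s) {Q : ι → Finset (ℕ × ℕ)} (hQ : ∀ i, Q i ⊆ firstSlots m n) :
    weight m δ n (⋂ i, attachEvent (Q i) (s i)) ≤
      ∏ i, weight m δ n (attachEvent (Q i) (s i)) := by
  induction n generalizing Q with
  | zero =>
    have hempty : ∀ i, Q i = ∅ := fun i => subset_empty.mp (by simpa [firstSlots] using hQ i)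
    simp [hempty, attachEvent_empty, weight_univ hm hδ]
  | succ n ih =>
    by_cases htop : ∃ i, slot m n ∈ Q i
    · obtain ⟨i₀, hi₀⟩ := htop
      by_cases hclash : ∃ j ≠ i₀, slot m n ∈ Q j
      · obtain ⟨j, hj, hjtop⟩ := hclash
        have hempty : ⋂ i, attachEvent (Q i) (s i) = ∅ :=
          Set.eq_empty_of_forall_notMem fun h hh => hj <| hs <|
            ((Set.mem_iInter.mp hh j) _ hjtop).symm.trans ((Set.mem_iInter.mp hh i₀) _ hi₀)
        simp [hempty, weight]
      · push Not at hclash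
        exact weight_succ_iInter_le_of_slot_mem hm hδ (fun Q hQ => ih hQ) hQ hi₀ hclash
    · push Not at htop
      have hQ' : ∀ i, Q i ⊆ firstSlots m n := fun i =>
        (subset_insert_iff_of_notMem (htop i)).mp (firstSlots_succ n ▸ hQ i)
      have hdet : ∀ i, IsDeterminedBy (firstSlots m n) (attachEvent (Q i) (s i)) := fun i =>
        (isDeterminedBy_attachEvent _ _).mono (coe_subset.mpr (hQ' i))
      rw [weight_succ_of_isDeterminedBy hm hδ (IsDeterminedBy.iInter hdet),
        prod_congr rfl fun i _ => weight_succ_of_isDeterminedBy hm hδ (hdet i)]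
      exact ih hQ'

end Family

end PA

theorem negative_correlation_general (m : ℕ) (hm : 1 ≤ m) (δ : ℝ) (hδ : -(m : ℝ) < δ)
    (μ : MeasureTheory.Measure (ℕ → ℕ → ℕ)) (hμ : PA.IsPAc m δ μ)
    (k : ℕ) (s : Fin k → ℕ) (hs : Function.Injective s)
    (n : Fin k → ℕ)
    (T : (i : Fin k) → Fin (n i) → ℕ) (J : (i : Fin k) → Fin (n i) → ℕ)
    (hT : ∀ i a, 3 ≤ T i a) (hJ : ∀ i a, J i a < m) :
    μ (⋂ i : Fin k, {g | ∀ a : Fin (n i), g (T i a) (J i a) = s i}) ≤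
      ∏ i : Fin k, μ {g | ∀ a : Fin (n i), g (T i a) (J i a) = s i} := by
  set Q : Fin k → Finset (ℕ × ℕ) := fun i => Finset.univ.image fun a => (T i a, J i a)
  set t := Finset.univ.sup fun i => Finset.univ.sup (T i)
  have hE : ∀ i, {g : ℕ → ℕ → ℕ | ∀ a : Fin (n i), g (T i a) (J i a) = s i} =
      PA.attachEvent (Q i) (s i) := fun i => by
    ext g
    simp [PA.attachEvent, Q]
  have hQ : ∀ i, Q i ⊆ PA.firstSlots m (t * m) := fun i => by
    rw [PA.firstSlots_mul hm]
    simp only [Q, Finset.image_subset_iff, Finset.mem_univ, Finset.mem_product, Finset.mem_Ioc,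
      Finset.mem_range, forall_const]
    intro a
    have := (Finset.le_sup (f := T i) (Finset.mem_univ a)).trans
      (Finset.le_sup (f := fun i => Finset.univ.sup (T i)) (Finset.mem_univ i))
    exact ⟨⟨hT i a, by omega⟩, hJ i a⟩
  have hdet : ∀ i, PA.IsDeterminedBy (PA.firstSlots m (t * m)) (PA.attachEvent (Q i) (s i)) :=
    fun i => (PA.isDeterminedBy_attachEvent _ _).mono (Finset.coe_subset.mpr (hQ i))
  simp only [hE]
  rw [PA.measure_eq_weight hm hδ hμ t (PA.IsDeterminedBy.iInter hdet),
    Finset.prod_congr rfl fun i _ => PA.measure_eq_weight hm hδ hμ t (hdet i)]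
  exact PA.weight_iInter_attachEvent_le_prod hm hδ hs hQ

/-- **Negative correlation of attachment events.**
In the model (c) preferential attachment process, fix k ≥ 1 distinct vertices
s₁,…,s_k, and for each s among them let E_s = ⋂_{i=1}^{n_s} {g(t_i,j_i) = s} be an
intersection of attachment events with target s (arbitrary times t_i ≥ 3 and edge
indices j_i < m). Then P(⋂ E_{s_i}) ≤ ∏ P(E_{s_i}). -/
theorem negative_correlation (m : ℕ) (hm : 1 ≤ m) (δ : ℝ) (hδ : -(m : ℝ) < δ)
    (μ : MeasureTheory.Measure (ℕ → ℕ → ℕ)) (hμ : PA.IsPAc m δ μ)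
    (k : ℕ) (hk : 1 ≤ k) (s : Fin k → ℕ) (hs : Function.Injective s)
    (n : Fin k → ℕ) (hn : ∀ i, 1 ≤ n i)
    (T : (i : Fin k) → Fin (n i) → ℕ) (J : (i : Fin k) → Fin (n i) → ℕ)
    (hT : ∀ i a, 3 ≤ T i a) (hJ : ∀ i a, J i a < m) :
    μ (⋂ i : Fin k, {g | ∀ a : Fin (n i), g (T i a) (J i a) = s i}) ≤
      ∏ i : Fin k, μ {g | ∀ a : Fin (n i), g (T i a) (J i a) = s i} :=
  negative_correlation_general m hm δ hδ μ hμ k s hs n T J hT hJ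
end

section
/- Fix a ∈ (0, 1/2). For every b > a with a + b < 1, setting C_{a,b} = 1/(b−a) + 2/(1−a−b), one has for every pair of integers 1 ≤ i < t and every k ≥ 1 that f_k(i,t) ≤ C_{a,b}^k / (i^b t^{1−b}). -/
/-!
Forget that the `s_j` are distinct or positive and sum, in `ℝ≥0∞` (so that nothing has to be shown
summable), over all walks `i = s₀, s₁, …, s_k = t`. For the edge weight
`w(m, n) = min(m, n)^(-a) max(m, n)^(a-1)` the potential `φ(n) = n^(-b)` satisfies
`∑ₙ w(m, n) φ(n) ≤ (1/(b-a) + 1/(1-a-b)) φ(m)`: for `n ≤ m` the sum is compared with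
`∫₀^m x^(-(a+b)) dx`, for `n > m` with `∫_m^∞ x^(a-b-1) dx`, both through tangent-line inequalities
for `x ↦ x^p` that make the sums telescope. Peeling off the first step of a walk and bounding the
last one by `w(m, t) ≤ m^(-b) t^(b-1)` gives the claim by induction on `k`; the spare factor
`1/(b-a) + 2/(1-a-b) ≥ 1` absorbs the missing power of the constant.
-/

open scoped ENNReal
open Real Finset

lemma sub_one_rpow_le_rpow_sub_mul {p x : ℝ} (hp0 : 0 ≤ p) (hp1 : p ≤ 1) (hx : 1 ≤ x) :
    (x - 1) ^ p ≤ x ^ p - p * x ^ (p - 1) := by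
  have hx0 : 0 < x := by linarith
  have bernoulli := rpow_one_add_le_one_add_mul_self
    (neg_le_neg (inv_le_one_of_one_le₀ hx)) hp0 hp1
  have hsplit : (x - 1) ^ p = x ^ p * (1 + -x⁻¹) ^ p := by
    rw [← mul_rpow hx0.le (by linarith [inv_le_one_of_one_le₀ hx])]
    field_simp
    ring_nf
  calc (x - 1) ^ p = x ^ p * (1 + -x⁻¹) ^ p := hsplit
    _ ≤ x ^ p * (1 + p * -x⁻¹) := by gcongr
    _ = x ^ p - p * x ^ (p - 1) := by rw [rpow_sub_one hx0.ne']; ring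

lemma rpow_sub_mul_le_sub_one_rpow {p x : ℝ} (hp : p ≤ 0) (hx : 1 < x) :
    x ^ p - p * x ^ (p - 1) ≤ (x - 1) ^ p := by
  have hx0 : 0 < x := by linarith
  have hy0 : 0 < x - 1 := by linarith
  have bernoulli := one_add_mul_self_le_rpow_one_add
    (by linarith [inv_pos.2 hy0] : -1 ≤ (x - 1)⁻¹) (by linarith : 1 ≤ 1 - p)
  have hx' : 1 + (x - 1)⁻¹ = x / (x - 1) := by field_simp; ring
  rw [hx', div_rpow hx0.le hy0.le, rpow_sub hx0, rpow_sub hy0, rpow_one, rpow_one] at bernoulli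
  have hA := rpow_pos_of_pos hx0 p
  have hB := rpow_pos_of_pos hy0 p
  rw [rpow_sub_one hx0.ne']
  field_simp at bernoulli ⊢
  nlinarith

lemma sum_range_rpow_neg_le {c : ℝ} (hc0 : 0 < c) (hc1 : c < 1) (n : ℕ) :
    ∑ k ∈ range (n + 1), (k : ℝ) ^ (-c) ≤ (n : ℝ) ^ (1 - c) / (1 - c) := by
  set G : ℕ → ℝ := fun k => (k : ℝ) ^ (1 - c)
  have hterm (k : ℕ) : ((k + 1 : ℕ) : ℝ) ^ (-c) ≤ (G (k + 1) - G k) / (1 - c) := by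
    have := sub_one_rpow_le_rpow_sub_mul (p := 1 - c) (x := ((k + 1 : ℕ) : ℝ)) (by linarith)
      (by linarith) (by simp)
    rw [le_div_iff₀ (by linarith)]
    simp only [G, Nat.cast_add, Nat.cast_one, add_sub_cancel_right, sub_sub_cancel_left] at this ⊢
    linarith
  rw [sum_range_succ', Nat.cast_zero, zero_rpow (neg_ne_zero.2 hc0.ne'), add_zero]
  calc ∑ k ∈ range n, ((k + 1 : ℕ) : ℝ) ^ (-c)
      ≤ ∑ k ∈ range n, (G (k + 1) - G k) / (1 - c) := sum_le_sum fun k _ => hterm k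
    _ = (G n - G 0) / (1 - c) := by rw [← sum_div, sum_range_sub]
    _ = (n : ℝ) ^ (1 - c) / (1 - c) := by simp [G, zero_rpow (sub_ne_zero.2 hc1.ne')]

lemma sum_range_rpow_neg_sub_one_le {e : ℝ} (he : 0 < e) {m : ℕ} (hm : 1 ≤ m) (N : ℕ) :
    ∑ j ∈ range N, ((m + 1 + j : ℕ) : ℝ) ^ (-e - 1) ≤ (m : ℝ) ^ (-e) / e := by
  set G : ℕ → ℝ := fun j => ((m + j : ℕ) : ℝ) ^ (-e)
  have hterm (j : ℕ) : ((m + 1 + j : ℕ) : ℝ) ^ (-e - 1) ≤ (G j - G (j + 1)) / e := by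
    have := rpow_sub_mul_le_sub_one_rpow (p := -e) (x := ((m + 1 + j : ℕ) : ℝ)) (by linarith)
      (by push_cast; linarith [(Nat.one_le_cast (α := ℝ)).2 hm, (j.cast_nonneg : (0 : ℝ) ≤ j)])
    rw [le_div_iff₀ he]
    simp only [G, Nat.cast_add, Nat.cast_one] at this ⊢
    rw [show (m : ℝ) + 1 + j - 1 = m + j by ring] at this
    rw [show (m : ℝ) + 1 + j = m + (j + 1) by ring] at this ⊢
    linarith
  calc ∑ j ∈ range N, ((m + 1 + j : ℕ) : ℝ) ^ (-e - 1)
      ≤ ∑ j ∈ range N, (G j - G (j + 1)) / e := sum_le_sum fun j _ => hterm j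
    _ = (G 0 - G N) / e := by rw [← sum_div, sum_range_sub']
    _ ≤ (m : ℝ) ^ (-e) / e := by
      gcongr
      simp only [G, add_zero, sub_le_self_iff]
      positivity

section walks

variable {α M : Type*}

def walkWeight [CommMonoid M] (w : α → α → M) {k : ℕ} (s : Fin (k + 1) → α) : M :=
  ∏ j : Fin k, w (s j.castSucc) (s j.succ)

lemma walkWeight_cons [CommMonoid M] (w : α → α → M) (x : α) {k : ℕ} (s : Fin (k + 1) → α) :
    walkWeight w (Fin.cons x s : Fin (k + 2) → α) = w x (s 0) * walkWeight w s := by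
  simp [walkWeight, Fin.prod_univ_succ]

lemma walkWeight_nonneg [CommMonoidWithZero M] [PartialOrder M] [ZeroLEOneClass M] [PosMulMono M]
    {w : α → α → M} (hw : ∀ m n, 0 ≤ w m n) {k : ℕ} (s : Fin (k + 1) → α) :
    0 ≤ walkWeight w s :=
  prod_nonneg fun _ _ => hw _ _

lemma ofReal_walkWeight {w : α → α → ℝ} (hw : ∀ m n, 0 ≤ w m n) {k : ℕ} (s : Fin (k + 1) → α) :
    ENNReal.ofReal (walkWeight w s) = walkWeight (fun m n => ENNReal.ofReal (w m n)) s :=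
  ENNReal.ofReal_prod_of_nonneg fun _ _ => hw _ _

def walkVia {k : ℕ} (i : α) (x : Fin k → α) (t : α) : Fin (k + 2) → α :=
  Fin.cons i (Fin.snoc x t)

@[simp]
lemma walkVia_zero {k : ℕ} (i : α) (x : Fin k → α) (t : α) : walkVia i x t 0 = i :=
  Fin.cons_zero _ _

lemma walkVia_init_tail {k : ℕ} (s : Fin (k + 2) → α) :
    walkVia (s 0) (Fin.init (Fin.tail s)) (s (Fin.last _)) = s := by
  change Fin.cons (s 0) (Fin.snoc (Fin.init (Fin.tail s)) (Fin.tail s (Fin.last k))) = s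
  rw [Fin.snoc_init_self, Fin.cons_self_tail]

lemma walkVia_cons {k : ℕ} (i y : α) (x : Fin k → α) (t : α) :
    walkVia i (Fin.cons y x) t = Fin.cons i (walkVia y x t) := by
  simp only [walkVia, Fin.cons_snoc_eq_snoc_cons]

lemma tsum_walkWeight_subtype_le {k : ℕ} (w : α → α → ℝ≥0∞) (i t : α)
    (P : (Fin (k + 2) → α) → Prop) (hP : ∀ s, P s → s 0 = i ∧ s (Fin.last _) = t) :
    ∑' s : {s // P s}, walkWeight w s.1 ≤ ∑' x : Fin k → α, walkWeight w (walkVia i x t) := by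
  have hrec (s : {s // P s}) : walkVia i (Fin.init (Fin.tail s.1)) t = s.1 := by
    obtain ⟨hi, ht⟩ := hP s.1 s.2
    rw [← hi, ← ht, walkVia_init_tail]
  have hinj : Function.Injective fun s : {s // P s} => Fin.init (Fin.tail s.1) :=
    fun s s' (h : Fin.init (Fin.tail s.1) = Fin.init (Fin.tail s'.1)) =>
      Subtype.ext <| by rw [← hrec s, ← hrec s', h]
  calc ∑' s : {s // P s}, walkWeight w s.1
      = ∑' s : {s // P s}, walkWeight w (walkVia i (Fin.init (Fin.tail s.1)) t) := by
        simp only [hrec]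
    _ ≤ _ := ENNReal.tsum_comp_le_tsum_of_injective hinj fun x => walkWeight w (walkVia i x t)

lemma tsum_walkWeight_walkVia_le (w : α → α → ℝ≥0∞) (φ ψ : α → ℝ≥0∞) (C : ℝ≥0∞)
    (hw : ∀ m n, w m n ≤ φ m * ψ n) (hφ : ∀ m, ∑' n, w m n * φ n ≤ C * φ m)
    (k : ℕ) (i t : α) :
    ∑' x : Fin k → α, walkWeight w (walkVia i x t) ≤ C ^ k * (φ i * ψ t) := by
  induction k generalizing i with
  | zero => simpa [walkVia, walkWeight, Fin.snoc_zero] using hw i t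
  | succ k ih =>
    calc ∑' x : Fin (k + 1) → α, walkWeight w (walkVia i x t)
        = ∑' p : α × (Fin k → α), walkWeight w (walkVia i (Fin.cons p.1 p.2) t) :=
          ((Fin.consEquiv fun _ => α).tsum_eq _).symm
      _ = ∑' y, w i y * ∑' x : Fin k → α, walkWeight w (walkVia y x t) := by
          simp only [ENNReal.tsum_prod', walkVia_cons, walkWeight_cons, walkVia_zero,
            ENNReal.tsum_mul_left]
      _ ≤ ∑' y, w i y * (C ^ k * (φ y * ψ t)) := by gcongr with y; exact ih y
      _ = C ^ k * ψ t * ∑' y, w i y * φ y := by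
          rw [← ENNReal.tsum_mul_left]; congr 1; ext y; ring
      _ ≤ C ^ k * ψ t * (C * φ i) := by gcongr; exact hφ i
      _ = C ^ (k + 1) * (φ i * ψ t) := by ring

end walks

lemma tsum_le_of_tsum_ofReal_le {ι : Type*} {f : ι → ℝ} (hf : ∀ x, 0 ≤ f x) {c : ℝ} (hc : 0 ≤ c)
    (h : ∑' x, ENNReal.ofReal (f x) ≤ ENNReal.ofReal c) : ∑' x, f x ≤ c := by
  have hsum : ∑' x, f x = (∑' x, ENNReal.ofReal (f x)).toReal := by
    rw [ENNReal.tsum_toReal_eq fun _ => ENNReal.ofReal_ne_top]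
    simp only [ENNReal.toReal_ofReal (hf _)]
  exact hsum ▸ ENNReal.toReal_le_of_le_ofReal hc h

noncomputable def edgeWeight (a : ℝ) (m n : ℕ) : ℝ :=
  1 / (((min m n : ℕ) : ℝ) ^ a * ((max m n : ℕ) : ℝ) ^ (1 - a))

section edgeWeight

variable {a b : ℝ}

lemma edgeWeight_comm (a : ℝ) (m n : ℕ) : edgeWeight a m n = edgeWeight a n m := by
  rw [edgeWeight, edgeWeight, min_comm, max_comm]

lemma edgeWeight_of_le {m n : ℕ} (h : n ≤ m) :
    edgeWeight a m n = (n : ℝ) ^ (-a) * (m : ℝ) ^ (a - 1) := by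
  rw [edgeWeight, min_eq_right h, max_eq_left h, rpow_neg n.cast_nonneg, ← neg_sub,
    rpow_neg m.cast_nonneg, one_div, mul_inv, inv_inv]

lemma edgeWeight_nonneg (a : ℝ) (m n : ℕ) : 0 ≤ edgeWeight a m n := by
  unfold edgeWeight; positivity

-- `(0 : ℝ) ^ (-a) = 0` makes walks through `0` weightless, so the constraint `1 ≤ s j` can be
-- dropped.
lemma edgeWeight_zero_left (ha : a ≠ 0) (n : ℕ) : edgeWeight a 0 n = 0 := by
  rw [edgeWeight_comm, edgeWeight_of_le n.zero_le, Nat.cast_zero, zero_rpow (neg_ne_zero.2 ha),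
    zero_mul]

lemma edgeWeight_le_rpow (ha : 0 < a) (hab : a ≤ b) (hab1 : a + b ≤ 1) (m n : ℕ) :
    edgeWeight a m n ≤ (m : ℝ) ^ (-b) * (n : ℝ) ^ (b - 1) := by
  rcases Nat.eq_zero_or_pos m with rfl | hm
  · rw [edgeWeight_zero_left ha.ne']; positivity
  rcases Nat.eq_zero_or_pos n with rfl | hn
  · rw [edgeWeight_comm, edgeWeight_zero_left ha.ne']; positivity
  have hm0 : (0 : ℝ) < m := Nat.cast_pos.2 hm
  have hn0 : (0 : ℝ) < n := Nat.cast_pos.2 hn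
  rcases le_total n m with h | h
  · rw [edgeWeight_of_le h]
    calc (n : ℝ) ^ (-a) * (m : ℝ) ^ (a - 1)
        = (n : ℝ) ^ (b - 1) * (n : ℝ) ^ (1 - a - b) * (m : ℝ) ^ (a - 1) := by
          rw [← rpow_add hn0]; ring_nf
      _ ≤ (n : ℝ) ^ (b - 1) * (m : ℝ) ^ (1 - a - b) * (m : ℝ) ^ (a - 1) := by
          gcongr; linarith
      _ = (m : ℝ) ^ (-b) * (n : ℝ) ^ (b - 1) := by
          rw [mul_assoc, ← rpow_add hm0]; ring_nf
  · rw [edgeWeight_comm, edgeWeight_of_le h]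
    calc (m : ℝ) ^ (-a) * (n : ℝ) ^ (a - 1)
        = (m : ℝ) ^ (-b) * (m : ℝ) ^ (b - a) * (n : ℝ) ^ (a - 1) := by
          rw [← rpow_add hm0]; ring_nf
      _ ≤ (m : ℝ) ^ (-b) * (n : ℝ) ^ (b - a) * (n : ℝ) ^ (a - 1) := by
          gcongr
      _ = (m : ℝ) ^ (-b) * (n : ℝ) ^ (b - 1) := by
          rw [mul_assoc, ← rpow_add hn0]; ring_nf

lemma sum_range_edgeWeight_mul_rpow_le (ha : 0 < a) (hab : a < b) (hab1 : a + b < 1)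
    {m : ℕ} (hm : 1 ≤ m) (N : ℕ) :
    ∑ n ∈ range N, edgeWeight a m n * (n : ℝ) ^ (-b) ≤
      (1 / (b - a) + 1 / (1 - a - b)) * (m : ℝ) ^ (-b) := by
  have hm0 : (0 : ℝ) < m := Nat.cast_pos.2 hm
  set g : ℕ → ℝ := fun n => edgeWeight a m n * (n : ℝ) ^ (-b)
  have hg (n : ℕ) : 0 ≤ g n := mul_nonneg (edgeWeight_nonneg a m n) (by positivity)
  have hhead : ∑ n ∈ range (m + 1), g n ≤ (m : ℝ) ^ (-b) / (1 - a - b) := by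
    have hterm : ∀ n ∈ range (m + 1), g n = (m : ℝ) ^ (a - 1) * (n : ℝ) ^ (-(a + b)) := by
      intro n hn
      simp only [g]
      rw [edgeWeight_of_le (Nat.lt_succ_iff.1 (mem_range.1 hn)), neg_add,
        rpow_add' n.cast_nonneg (by linarith)]
      ring
    calc ∑ n ∈ range (m + 1), g n
        = (m : ℝ) ^ (a - 1) * ∑ n ∈ range (m + 1), (n : ℝ) ^ (-(a + b)) := by
          rw [sum_congr rfl hterm, mul_sum]
      _ ≤ (m : ℝ) ^ (a - 1) * ((m : ℝ) ^ (1 - (a + b)) / (1 - (a + b))) := by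
          gcongr; exact sum_range_rpow_neg_le (by linarith) hab1 m
      _ = (m : ℝ) ^ (-b) / (1 - a - b) := by
          rw [mul_div_assoc', ← rpow_add hm0]; ring_nf
  have htail : ∑ j ∈ range N, g (m + 1 + j) ≤ (m : ℝ) ^ (-b) / (b - a) := by
    have hterm (j : ℕ) :
        g (m + 1 + j) = (m : ℝ) ^ (-a) * ((m + 1 + j : ℕ) : ℝ) ^ (-(b - a) - 1) := by
      simp only [g]
      rw [edgeWeight_comm, edgeWeight_of_le (by omega), mul_assoc,
        ← rpow_add' (Nat.cast_nonneg _) (by linarith)]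
      ring_nf
    calc ∑ j ∈ range N, g (m + 1 + j)
        = (m : ℝ) ^ (-a) * ∑ j ∈ range N, ((m + 1 + j : ℕ) : ℝ) ^ (-(b - a) - 1) := by
          simp only [hterm, mul_sum]
      _ ≤ (m : ℝ) ^ (-a) * ((m : ℝ) ^ (-(b - a)) / (b - a)) := by
          gcongr; exact sum_range_rpow_neg_sub_one_le (by linarith) hm N
      _ = (m : ℝ) ^ (-b) / (b - a) := by
          rw [mul_div_assoc', ← rpow_add hm0]; ring_nf
  calc ∑ n ∈ range N, g n
      ≤ ∑ n ∈ range (m + 1 + N), g n :=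
        sum_le_sum_of_subset_of_nonneg (range_subset_range.2 (by omega)) fun n _ _ => hg n
    _ = ∑ n ∈ range (m + 1), g n + ∑ j ∈ range N, g (m + 1 + j) := sum_range_add g _ _
    _ ≤ (m : ℝ) ^ (-b) / (1 - a - b) + (m : ℝ) ^ (-b) / (b - a) := add_le_add hhead htail
    _ = (1 / (b - a) + 1 / (1 - a - b)) * (m : ℝ) ^ (-b) := by ring

lemma tsum_ofReal_edgeWeight_mul_le (ha : 0 < a) (hab : a < b) (hab1 : a + b < 1) (m : ℕ) :
    ∑' n, ENNReal.ofReal (edgeWeight a m n) * ENNReal.ofReal ((n : ℝ) ^ (-b)) ≤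
      ENNReal.ofReal (1 / (b - a) + 1 / (1 - a - b)) * ENNReal.ofReal ((m : ℝ) ^ (-b)) := by
  rcases Nat.eq_zero_or_pos m with rfl | hm
  · simp [edgeWeight_zero_left ha.ne']
  rw [← ENNReal.ofReal_mul' (by positivity)]
  refine ENNReal.tsum_le_of_sum_range_le fun N => ?_
  simp only [← ENNReal.ofReal_mul (edgeWeight_nonneg a m _)]
  rw [← ENNReal.ofReal_sum_of_nonneg fun n _ =>
    mul_nonneg (edgeWeight_nonneg a m n) (by positivity)]
  exact ENNReal.ofReal_le_ofReal (sum_range_edgeWeight_mul_rpow_le ha hab hab1 hm N)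

lemma tsum_walkWeight_edgeWeight_le (ha : 0 < a) (hab : a < b) (hab1 : a + b < 1)
    (k i t : ℕ) :
    ∑' x : Fin k → ℕ, walkWeight (fun m n => ENNReal.ofReal (edgeWeight a m n)) (walkVia i x t) ≤
      ENNReal.ofReal ((1 / (b - a) + 1 / (1 - a - b)) ^ k / ((i : ℝ) ^ b * (t : ℝ) ^ (1 - b))) := by
  have hC : 0 ≤ 1 / (b - a) + 1 / (1 - a - b) := by
    have : 0 < b - a := by linarith
    have : 0 < 1 - a - b := by linarith
    positivity
  have hφψ : (i : ℝ) ^ (-b) * (t : ℝ) ^ (b - 1) = ((i : ℝ) ^ b * (t : ℝ) ^ (1 - b))⁻¹ := by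
    rw [rpow_neg i.cast_nonneg, ← neg_sub, rpow_neg t.cast_nonneg, mul_inv]
  rw [div_eq_mul_inv, ← hφψ, ENNReal.ofReal_mul (by positivity), ENNReal.ofReal_pow hC,
    ENNReal.ofReal_mul (by positivity)]
  refine tsum_walkWeight_walkVia_le _ _ (fun n : ℕ => ENNReal.ofReal ((n : ℝ) ^ (b - 1))) _
    (fun m n => ?_) (tsum_ofReal_edgeWeight_mul_le ha hab hab1) k i t
  rw [← ENNReal.ofReal_mul (by positivity)]
  exact ENNReal.ofReal_le_ofReal (edgeWeight_le_rpow ha hab.le hab1.le m n)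

end edgeWeight

theorem fk_bound_general (a b : ℝ) (ha0 : 0 < a) (hab : a < b)
    (hab1 : a + b < 1) (i t : ℕ) (k : ℕ) (hk : 1 ≤ k) :
    (∑' s : {s : Fin (k + 1) → ℕ // Function.Injective s ∧ s 0 = i ∧
        s (Fin.last k) = t ∧ ∀ j, 1 ≤ s j},
      ∏ j : Fin k,
        1 / (((min (s.1 j.castSucc) (s.1 j.succ) : ℕ) : ℝ) ^ a *
          ((max (s.1 j.castSucc) (s.1 j.succ) : ℕ) : ℝ) ^ (1 - a))) ≤
      (1 / (b - a) + 2 / (1 - a - b)) ^ k / ((i : ℝ) ^ b * (t : ℝ) ^ (1 - b)) := by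
  obtain ⟨k, rfl⟩ := Nat.exists_eq_add_of_le' hk
  have hba : 0 < b - a := by linarith
  have hab1' : 0 < 1 - a - b := by linarith
  have hC : 1 ≤ 1 / (b - a) + 2 / (1 - a - b) := by
    have : 1 ≤ 1 / (b - a) := by rw [le_one_div one_pos hba]; linarith
    have : 0 ≤ 2 / (1 - a - b) := by positivity
    linarith
  change ∑' s : {s : Fin (k + 1 + 1) → ℕ // Function.Injective s ∧ s 0 = i ∧
    s (Fin.last (k + 1)) = t ∧ ∀ j, 1 ≤ s j}, walkWeight (edgeWeight a) s.1 ≤ _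
  refine tsum_le_of_tsum_ofReal_le (fun _ => walkWeight_nonneg (edgeWeight_nonneg a) _)
    (by positivity) ?_
  simp only [ofReal_walkWeight (edgeWeight_nonneg a)]
  calc _ ≤ ∑' x : Fin k → ℕ,
          walkWeight (fun m n => ENNReal.ofReal (edgeWeight a m n)) (walkVia i x t) :=
        tsum_walkWeight_subtype_le _ i t _ fun s hs => ⟨hs.2.1, hs.2.2.1⟩
    _ ≤ ENNReal.ofReal ((1 / (b - a) + 1 / (1 - a - b)) ^ k /
          ((i : ℝ) ^ b * (t : ℝ) ^ (1 - b))) :=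
        tsum_walkWeight_edgeWeight_le ha0 hab hab1 k i t
    _ ≤ _ := by
        gcongr ENNReal.ofReal (?_ / _)
        calc (1 / (b - a) + 1 / (1 - a - b)) ^ k ≤ (1 / (b - a) + 2 / (1 - a - b)) ^ k := by
              gcongr; norm_num
          _ ≤ (1 / (b - a) + 2 / (1 - a - b)) ^ (k + 1) := pow_le_pow_right₀ hC k.le_succ

/-- **A bound on f_k.**
Fix a ∈ (0,1/2). For every b > a with a + b < 1, setting
C_{a,b} = 1/(b−a) + 2/(1−a−b), for all integers 1 ≤ i < t and all k ≥ 1 one has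
f_k(i,t) ≤ C_{a,b}^k / (i^b t^{1−b}), where f_k(i,t) is the sum over all sequences
(s₀,…,s_k) of distinct positive integers with s₀ = i, s_k = t of
∏_{j<k} (min(s_j,s_{j+1}))^{-a} (max(s_j,s_{j+1}))^{-(1-a)}. -/
theorem fk_bound (a b : ℝ) (ha0 : 0 < a) (ha : a < 1 / 2) (hab : a < b)
    (hab1 : a + b < 1) (i t : ℕ) (hi : 1 ≤ i) (hit : i < t) (k : ℕ) (hk : 1 ≤ k) :
    (∑' s : {s : Fin (k + 1) → ℕ // Function.Injective s ∧ s 0 = i ∧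
        s (Fin.last k) = t ∧ ∀ j, 1 ≤ s j},
      ∏ j : Fin k,
        1 / (((min (s.1 j.castSucc) (s.1 j.succ) : ℕ) : ℝ) ^ a *
          ((max (s.1 j.castSucc) (s.1 j.succ) : ℕ) : ℝ) ^ (1 - a))) ≤
      (1 / (b - a) + 2 / (1 - a - b)) ^ k / ((i : ℝ) ^ b * (t : ℝ) ^ (1 - b)) :=
  fk_bound_general a b ha0 hab hab1 i t k hk
end

section
/- Let e, t be positive integers and q ∈ [0,1] with e·q ≤ 1. Let X₁,…,X_t be independent identically distributed random variables with values in {0,1,…,e}, where P(X_j = i) = q for each i ∈ {1,…,e} and P(X_j = 0) = 1 − e·q. Let M = #{i ∈ {1,…,e} : ∃ j ∈ {1,…,t} with X_j = i} be the number of cells in {1,…,e} hit by at least one trial. Then E[M] = e(1 − (1−q)^t) and Var(M) ≤ E[M]. -/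
open MeasureTheory ProbabilityTheory Finset

/-! The count `M` is the sum of the indicators of the events `E i` = "some trial lands in cell `i`".
By independence `P(E i) = 1 - (1 - q)^t`, which gives the mean. For distinct cells
`P(E i ∩ E i') - P(E i) P(E i') = (1 - 2q)^t - ((1 - q)^2)^t ≤ 0`: the indicators are negatively
correlated, so `Var M ≤ ∑ Var 1_{E i} ≤ ∑ P(E i) = E M`. -/

lemma memLp_indicator_one {Ω : Type*} [MeasurableSpace Ω] {μ : Measure Ω} [IsFiniteMeasure μ]
    {A : Set Ω} (hA : MeasurableSet A) (p : ENNReal) : MemLp (A.indicator (1 : Ω → ℝ)) p μ :=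
  (memLp_const 1).indicator hA

section NegativelyCorrelated

variable {Ω ι : Type*} [MeasurableSpace Ω] {μ : Measure Ω} [IsProbabilityMeasure μ]

lemma covariance_indicator_one {A B : Set Ω} (hA : MeasurableSet A) (hB : MeasurableSet B) :
    cov[A.indicator 1, B.indicator 1; μ] = μ.real (A ∩ B) - μ.real A * μ.real B := by
  rw [covariance_eq_sub (memLp_indicator_one hA 2) (memLp_indicator_one hB 2),
    ← Set.inter_indicator_one, integral_indicator_one (hA.inter hB), integral_indicator_one hA,
    integral_indicator_one hB]

lemma variance_sum_indicator_le_sum_measureReal {s : Finset ι} {A : ι → Set Ω}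
    (hA : ∀ i ∈ s, MeasurableSet (A i))
    (hcorr : ∀ i ∈ s, ∀ j ∈ s, i ≠ j → μ.real (A i ∩ A j) ≤ μ.real (A i) * μ.real (A j)) :
    Var[fun ω ↦ ∑ i ∈ s, (A i).indicator 1 ω; μ] ≤ ∑ i ∈ s, μ.real (A i) := by
  classical
  rw [variance_fun_sum' fun i hi ↦ memLp_indicator_one (hA i hi) 2]
  gcongr with i hi
  calc ∑ j ∈ s, cov[(A i).indicator 1, (A j).indicator 1; μ]
      ≤ ∑ j ∈ s, if i = j then μ.real (A i) else 0 := by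
        gcongr with j hj
        rw [covariance_indicator_one (hA i hi) (hA j hj)]
        split_ifs with hij
        · subst hij
          rw [Set.inter_self]
          nlinarith [measureReal_nonneg (μ := μ) (s := A i)]
        · linarith [hcorr i hi j hj hij]
    _ = μ.real (A i) := by rw [sum_ite_eq, if_pos hi]

end NegativelyCorrelated

namespace ProbabilityTheory

variable {Ω ι α : Type*} [MeasurableSpace Ω] [MeasurableSpace α] {μ : Measure Ω}
  [IsProbabilityMeasure μ] [Fintype ι] {X : ι → Ω → α}

lemma iIndepFun.measureReal_iUnion_preimage (hind : iIndepFun X μ) (hX : ∀ j, Measurable (X j))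
    {s : Set α} (hs : MeasurableSet s) :
    μ.real (⋃ j, X j ⁻¹' s) = 1 - ∏ j, (1 - μ.real (X j ⁻¹' s)) := by
  have hmiss : μ.real (⋂ j, X j ⁻¹' sᶜ) = ∏ j, μ.real (X j ⁻¹' sᶜ) := by
    simp only [measureReal_def, hind.meas_iInter fun j ↦ ⟨sᶜ, hs.compl, rfl⟩,
      ENNReal.toReal_prod]
  have hcompl : μ.real (⋃ j, X j ⁻¹' s)ᶜ = ∏ j, (1 - μ.real (X j ⁻¹' s)) := by
    simp only [Set.compl_iUnion, ← Set.preimage_compl, hmiss]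
    simp only [Set.preimage_compl, probReal_compl_eq_one_sub (hX _ hs)]
  rw [← hcompl, probReal_compl_eq_one_sub (MeasurableSet.iUnion fun j ↦ hX j hs), sub_sub_cancel]

lemma iIndepFun.measureReal_iUnion_preimage_inter_le (hind : iIndepFun X μ)
    (hX : ∀ j, Measurable (X j)) {s t : Set α} (hs : MeasurableSet s) (ht : MeasurableSet t) (hst : Disjoint s t) :
    μ.real ((⋃ j, X j ⁻¹' s) ∩ ⋃ j, X j ⁻¹' t) ≤
      μ.real (⋃ j, X j ⁻¹' s) * μ.real (⋃ j, X j ⁻¹' t) := by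
  have hunion : (⋃ j, X j ⁻¹' s) ∪ ⋃ j, X j ⁻¹' t = ⋃ j, X j ⁻¹' (s ∪ t) := by
    simp only [Set.preimage_union, Set.iUnion_union_distrib]
  have hincl := measureReal_union_add_inter (μ := μ) (MeasurableSet.iUnion fun j ↦ hX j ht)
    (s := ⋃ j, X j ⁻¹' s)
  have hsum (j : ι) : μ.real (X j ⁻¹' (s ∪ t)) = μ.real (X j ⁻¹' s) + μ.real (X j ⁻¹' t) := by
    rw [Set.preimage_union, measureReal_union (hst.preimage _) (hX j ht)]
  rw [hunion, hind.measureReal_iUnion_preimage hX (hs.union ht),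
    hind.measureReal_iUnion_preimage hX hs, hind.measureReal_iUnion_preimage hX ht] at hincl
  rw [hind.measureReal_iUnion_preimage hX hs, hind.measureReal_iUnion_preimage hX ht]
  simp only [hsum] at hincl
  have hprod : ∏ j, (1 - (μ.real (X j ⁻¹' s) + μ.real (X j ⁻¹' t))) ≤
      (∏ j, (1 - μ.real (X j ⁻¹' s))) * ∏ j, (1 - μ.real (X j ⁻¹' t)) := by
    rw [← prod_mul_distrib]
    refine prod_le_prod (fun j _ ↦ ?_) (fun j _ ↦ ?_)
    · rw [← hsum]; linarith [measureReal_le_one (μ := μ) (s := X j ⁻¹' (s ∪ t))]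
    · nlinarith [measureReal_nonneg (μ := μ) (s := X j ⁻¹' s),
        measureReal_nonneg (μ := μ) (s := X j ⁻¹' t)]
  linarith

end ProbabilityTheory

theorem multinomial_nonempty_cells_general {Ω : Type*} [MeasurableSpace Ω] (μ : Measure Ω)
    [IsProbabilityMeasure μ] (e t : ℕ)
    (q : ℝ) (hq0 : 0 ≤ q)
    (X : Fin t → Ω → ℕ) (hXmeas : ∀ j, Measurable (X j))
    (hXdist : ∀ j : Fin t, ∀ i ∈ Finset.Icc 1 e,
      μ {ω | X j ω = i} = ENNReal.ofReal q)
    (hXindep : iIndepFun X μ) :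
    (∫ ω, ((((Finset.Icc 1 e).filter fun i => ∃ j, X j ω = i).card : ℝ)) ∂μ) =
        e * (1 - (1 - q) ^ t) ∧
      variance (fun ω => (((Finset.Icc 1 e).filter fun i => ∃ j, X j ω = i).card : ℝ)) μ ≤
        e * (1 - (1 - q) ^ t) := by
  set hit : ℕ → Set Ω := fun i ↦ ⋃ j, X j ⁻¹' {i}
  have hhit : ∀ i, MeasurableSet (hit i) := fun i ↦
    MeasurableSet.iUnion fun j ↦ hXmeas j (measurableSet_singleton i)
  have hcount : (fun ω ↦ (((Icc 1 e).filter fun i ↦ ∃ j, X j ω = i).card : ℝ)) =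
      fun ω ↦ ∑ i ∈ Icc 1 e, (hit i).indicator 1 ω := by
    ext ω
    rw [natCast_card_filter]
    refine sum_congr rfl fun i _ ↦ ?_
    by_cases h : ∃ j, X j ω = i <;> simp [hit, h]
  have hmean : ∑ i ∈ Icc 1 e, μ.real (hit i) = e * (1 - (1 - q) ^ t) := by
    have hcell : ∀ i ∈ Icc 1 e, μ.real (hit i) = 1 - (1 - q) ^ t := fun i hi ↦ by
      have hq : ∀ j, μ.real (X j ⁻¹' {i}) = q := fun j ↦ by
        rw [measureReal_def, ← ENNReal.toReal_ofReal hq0, ← hXdist j i hi]; rfl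
      simp only [hit, hXindep.measureReal_iUnion_preimage hXmeas (measurableSet_singleton i), hq,
        prod_const, card_univ, Fintype.card_fin]
    rw [sum_congr rfl hcell, sum_const, Nat.card_Icc, nsmul_eq_mul, Nat.add_sub_cancel]
  rw [hcount, integral_finsetSum _ fun i _ ↦ (integrable_const 1).indicator (hhit i)]
  simp only [integral_indicator_one (hhit _)]
  refine ⟨hmean, hmean ▸ variance_sum_indicator_le_sum_measureReal (fun i _ ↦ hhit i) ?_⟩
  intro i _ i' _ hii'
  exact hXindep.measureReal_iUnion_preimage_inter_le hXmeas (measurableSet_singleton i)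
    (measurableSet_singleton i') (Set.disjoint_singleton.2 hii')

/-- **Diameter multinomial graph (moment computation).**
Let e, t be positive integers and q ∈ [0,1] with e·q ≤ 1. Let X₁,…,X_t be i.i.d.
random variables with values in {0,1,…,e}, where P(X_j = i) = q for each
i ∈ {1,…,e} (and hence P(X_j = 0) = 1 − e·q). Let M be the number of cells in
{1,…,e} hit by at least one trial. Then E[M] = e(1 − (1−q)^t) and Var(M) ≤ E[M]. -/
theorem multinomial_nonempty_cells {Ω : Type*} [MeasurableSpace Ω] (μ : Measure Ω)
    [IsProbabilityMeasure μ] (e t : ℕ) (he : 1 ≤ e) (ht : 1 ≤ t)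
    (q : ℝ) (hq0 : 0 ≤ q) (hq1 : (e : ℝ) * q ≤ 1)
    (X : Fin t → Ω → ℕ) (hXmeas : ∀ j, Measurable (X j))
    (hXval : ∀ j ω, X j ω ≤ e)
    (hXdist : ∀ j : Fin t, ∀ i ∈ Finset.Icc 1 e,
      μ {ω | X j ω = i} = ENNReal.ofReal q)
    (hXindep : iIndepFun X μ) :
    (∫ ω, ((((Finset.Icc 1 e).filter fun i => ∃ j, X j ω = i).card : ℝ)) ∂μ) =
        e * (1 - (1 - q) ^ t) ∧
      variance (fun ω => (((Finset.Icc 1 e).filter fun i => ∃ j, X j ω = i).card : ℝ)) μ ≤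
        e * (1 - (1 - q) ^ t) :=
  multinomial_nonempty_cells_general μ e t q hq0 X hXmeas hXdist hXindep
end
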